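/- arXiv:2202.09264 — 14 statements merged into one kernel-verified Lean document; each statement's English description precedes it below -/
import Mathlib

section
/- For every integer n ≥ 2, the minimum t for which a 1-CFF(t,n) exists equals min{ s ∈ ℕ : binomial(s, ⌊s/2⌋) ≥ n }. -/
/-- `M` is a `d`-cover-free family: for every column `i₀` and every set `I` of at most `d`
columns with `i₀ ∉ I`, some row has a 1 in column `i₀` and 0 in all columns of `I`. -/
def IsCFF {R C : Type*} (d : ℕ) (M : R → C → Bool) : Prop :=
  ∀ (i₀ : C) (I : Finset C), I.card ≤ d → i₀ ∉ I →
    ∃ w : R, M w i₀ = true ∧ ∀ j ∈ I, M w j = false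

/-- `M` is an `(S,r)`-structure-aware cover-free family for the hypergraph with edge set `S`:
for every set `E` of at most `r` edges of `S`, every `I` contained in the union of `E`,
and every column `i₀ ∉ I`, some row has a 1 in column `i₀` and 0 in all columns of `I`. -/
def IsSCFF {R C : Type*} (r : ℕ) (S : Finset (Finset C)) (M : R → C → Bool) : Prop :=
  ∀ E : Finset (Finset C), E ⊆ S → E.card ≤ r →
    ∀ I : Finset C, (∀ i ∈ I, ∃ e ∈ E, i ∈ e) →
      ∀ i₀ : C, i₀ ∉ I →
        ∃ w : R, M w i₀ = true ∧ ∀ j ∈ I, M w j = false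

/-- `M` is an `(S,r)`-edge-identifying cover-free family for the hypergraph with edge set `S`:
for every set `E` of at most `r` edges of `S` and every column `i₀` outside the union of `E`,
some row has a 1 in column `i₀` and 0 in all columns belonging to the union of `E`. -/
def IsECFF {R C : Type*} (r : ℕ) (S : Finset (Finset C)) (M : R → C → Bool) : Prop :=
  ∀ E : Finset (Finset C), E ⊆ S → E.card ≤ r →
    ∀ i₀ : C, (∀ e ∈ E, i₀ ∉ e) →
      ∃ w : R, M w i₀ = true ∧ ∀ j : C, (∃ e ∈ E, j ∈ e) → M w j = false

-- Existence direction: from n ≤ C(s, s/2) with n ≥ 2, build a 1-CFF with s rows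
lemma exists_cff (n s : ℕ) (hn : 2 ≤ n) (h : n ≤ Nat.choose s (s / 2)) :
    ∃ M : Fin s → Fin n → Bool, IsCFF 1 M := by
  classical
  have hs2 : 2 ≤ s := by
    by_contra hlt
    push_neg at hlt
    interval_cases s <;> simp_all <;> omega
  have hcard : Fintype.card (Fin n) ≤
      Fintype.card ((Finset.univ : Finset (Fin s)).powersetCard (s / 2)) := by
    rw [Fintype.card_coe, Finset.card_powersetCard, Finset.card_univ, Fintype.card_fin,
      Fintype.card_fin]
    exact h
  obtain ⟨f⟩ := Function.Embedding.nonempty_of_card_le hcard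
  refine ⟨fun w i => decide (w ∈ (f i : Finset (Fin s))), ?_⟩
  intro i₀ I hI hi₀
  have hcard' : ∀ i : Fin n, ((f i : Finset (Fin s))).card = s / 2 := by
    intro i
    have := (f i).2
    rwa [Finset.mem_powersetCard_univ] at this
  haveI : Nonempty (Fin n) := ⟨i₀⟩
  rcases Finset.card_le_one_iff_subset_singleton.mp hI with ⟨j, hj⟩
  by_cases hji : j = i₀ ∨ I = ∅
  · -- then I is empty (since i₀ ∉ I)
    have hIe : I = ∅ := by
      rcases hji with hji | hIe
      · subst hji
        by_contra hne
        rcases Finset.nonempty_iff_ne_empty.mpr hne with ⟨x, hx⟩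
        have := hj hx
        simp at this
        exact hi₀ (this ▸ hx)
      · exact hIe
    subst hIe
    have hpos : 0 < ((f i₀ : Finset (Fin s))).card := by
      rw [hcard']; omega
    obtain ⟨w, hw⟩ := Finset.card_pos.mp hpos
    exact ⟨w, by simp [hw], by simp⟩
  · push_neg at hji
    obtain ⟨hji, hIne⟩ := hji
    -- I = {j}
    have hIj : I = {j} := by
      apply Finset.Subset.antisymm hj
      rcases hIne with ⟨x, hx⟩
      have hx' := hj hx
      simp at hx'
      subst hx'
      simp [hx]
    subst hIj
    have hji' : j ≠ i₀ := hji
    have hne : (f i₀ : Finset (Fin s)) ≠ (f j : Finset (Fin s)) := by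
      intro he
      exact hji' (f.injective (Subtype.ext he)).symm
    have hns : ¬ (f i₀ : Finset (Fin s)) ⊆ (f j : Finset (Fin s)) := by
      intro hsub
      exact hne (Finset.eq_of_subset_of_card_le hsub (by rw [hcard', hcard']))
    obtain ⟨w, hw1, hw2⟩ := Finset.not_subset.mp hns
    exact ⟨w, by simp [hw1], by simpa using hw2⟩

-- Sperner direction
lemma cff_bound (n t : ℕ) (M : Fin t → Fin n → Bool) (hM : IsCFF 1 M) :
    n ≤ Nat.choose t (t / 2) := by
  classical
  set supp : Fin n → Finset (Fin t) := fun i => Finset.univ.filter (fun w => M w i = true)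
    with hsupp
  have hkey : ∀ i j : Fin n, i ≠ j → ¬ supp i ⊆ supp j := by
    intro i j hij hsub
    obtain ⟨w, hw1, hw2⟩ := hM i {j} (by simp) (by simp [hij])
    have : w ∈ supp i := by simp [hsupp, hw1]
    have := hsub this
    simp [hsupp] at this
    rw [hw2 j (by simp)] at this
    exact absurd this (by simp)
  have hinj : Function.Injective supp := by
    intro i j he
    by_contra hij
    exact hkey i j hij (he ▸ Finset.Subset.refl _)
  set 𝒜 : Finset (Finset (Fin t)) := Finset.univ.image supp with h𝒜
  have hanti : IsAntichain (· ⊆ ·) (𝒜 : Set (Finset (Fin t))) := by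
    intro a ha b hb hab hsub
    simp [h𝒜] at ha hb
    obtain ⟨i, hi⟩ := ha
    obtain ⟨j, hj⟩ := hb
    exact hkey i j (by rintro rfl; exact hab (hi ▸ hj ▸ rfl)) (hi ▸ hj ▸ hsub)
  have := IsAntichain.sperner hanti
  rwa [h𝒜, Finset.card_image_of_injective _ hinj, Finset.card_univ, Fintype.card_fin,
    Fintype.card_fin] at this


/-- The minimum number of rows of a `1`-CFF with `n ≥ 2` columns equals
`min { s : binomial(s, ⌊s/2⌋) ≥ n }` (Sperner's theorem). -/
theorem stmt3 (n : ℕ) (hn : 2 ≤ n) :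
    sInf {t : ℕ | ∃ M : Fin t → Fin n → Bool, IsCFF 1 M} =
      sInf {s : ℕ | n ≤ Nat.choose s (s / 2)} := by
  have hRne : {s : ℕ | n ≤ Nat.choose s (s / 2)}.Nonempty := by
    refine ⟨2 * n, ?_⟩
    have h1 : Nat.choose (2 * n) 1 ≤ Nat.choose (2 * n) ((2 * n) / 2) :=
      Nat.choose_le_middle 1 (2 * n)
    simp only [Nat.choose_one_right] at h1
    calc n ≤ 2 * n := by omega
      _ ≤ _ := h1
  set s₀ := sInf {s : ℕ | n ≤ Nat.choose s (s / 2)} with hs₀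
  have hs₀mem : n ≤ Nat.choose s₀ (s₀ / 2) := Nat.sInf_mem hRne
  obtain ⟨M, hM⟩ := exists_cff n s₀ hn hs₀mem
  have hLne : {t : ℕ | ∃ M : Fin t → Fin n → Bool, IsCFF 1 M}.Nonempty := ⟨s₀, M, hM⟩
  apply le_antisymm
  · exact Nat.sInf_le ⟨M, hM⟩
  · obtain ⟨M', hM'⟩ := Nat.sInf_mem hLne
    exact Nat.sInf_le (cff_bound n _ M' hM')
end

section
/- Let H=([1,n],S) be a hypergraph and let M be an (S,r)-CFF(t,n). Let D ⊆ [1,n] be a set of defective items that admits a defect cover of at most r edges, i.e., there exist edges S₁,…,S_ℓ ∈ S with ℓ ≤ r and D ⊆ S₁∪⋯∪S_ℓ. For each row w define the test result y_w = 1 if there exists j ∈ D with M[w,j]=1, and y_w = 0 otherwise. Then for every item i ∈ [1,n]: i ∈ D if and only if y_w = 1 for every row w with M[w,i]=1. In particular, for every i ∉ D there exists a row w with M[w,i]=1 and M[w,j]=0 for all j ∈ D. -/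
/-- If `M` is an `(S,r)`-structure-aware CFF and the defective set `D` admits a defect cover
by at most `r` edges, then the test results `y` determine `D` exactly: an item is defective
iff every test containing it is positive; in particular every non-defective item occurs in
a test avoiding all defective items. -/
theorem stmt4 (r t n : ℕ)
    (S : Finset (Finset (Fin n))) (M : Fin t → Fin n → Bool)
    (hM : IsSCFF r S M)
    (D : Finset (Fin n))
    (E : Finset (Finset (Fin n))) (hES : E ⊆ S) (hEcard : E.card ≤ r)
    (hcover : ∀ i ∈ D, ∃ e ∈ E, i ∈ e)
    (y : Fin t → Bool) (hy : ∀ w, y w = true ↔ ∃ j ∈ D, M w j = true) :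
    (∀ i : Fin n, i ∈ D ↔ ∀ w : Fin t, M w i = true → y w = true) ∧
    (∀ i : Fin n, i ∉ D → ∃ w : Fin t, M w i = true ∧ ∀ j ∈ D, M w j = false) := by
  have key : ∀ i : Fin n, i ∉ D → ∃ w : Fin t, M w i = true ∧ ∀ j ∈ D, M w j = false := by
    intro i hi
    exact hM E hES hEcard D hcover i hi
  refine ⟨fun i => ⟨fun hiD w hw => (hy w).mpr ⟨i, hiD, hw⟩, fun h => ?_⟩, key⟩
  by_contra hi
  obtain ⟨w, hw1, hw2⟩ := key i hi
  have := (hy w).mp (h w hw1)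
  obtain ⟨j, hj, hj2⟩ := this
  simp [hw2 j hj] at hj2
end

section
/- Let H=([1,n],S) be a hypergraph and let M be an (S,r)-ECFF(t,n). Let D ⊆ [1,n] be a set of defective items and let {E₁,…,E_ℓ} ⊆ S with ℓ ≤ r be a minimal defect cover of D (i.e., D ⊆ E₁∪⋯∪E_ℓ and no proper subfamily of {E₁,…,E_ℓ} covers D). Then: (a) for every i₀ ∉ E₁∪⋯∪E_ℓ there exists a row w with M[w,i₀]=1 and M[w,j]=0 for all j ∈ D; and (b) for every index e ∈ {1,…,ℓ} there exists a defective item u ∈ D ∩ (E_e \ ∪_{i≠e} E_i) and a row w such that M[w,u]=1 and M[w,j]=0 for all j ∈ ∪_{i≠e} E_i. -/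
/-- For an `(S,r)`-edge-identifying CFF `M` and a minimal defect cover `E` of the defective
set `D` with at most `r` edges: (a) every item outside the union of `E` occurs in a test
avoiding all of `D`; (b) every edge `e` of the cover contains a defective item `u` belonging
to no other edge of the cover, and `u` occurs in a test avoiding all items of the other
edges of the cover. -/
theorem stmt5 (r t n : ℕ)
    (S : Finset (Finset (Fin n))) (M : Fin t → Fin n → Bool)
    (hM : IsECFF r S M)
    (D : Finset (Fin n))
    (E : Finset (Finset (Fin n))) (hES : E ⊆ S) (hEcard : E.card ≤ r)
    (hcover : ∀ i ∈ D, ∃ e ∈ E, i ∈ e)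
    (hmin : ∀ E' : Finset (Finset (Fin n)), E' ⊂ E → ¬ (∀ i ∈ D, ∃ e ∈ E', i ∈ e)) :
    (∀ i₀ : Fin n, (∀ e ∈ E, i₀ ∉ e) →
        ∃ w : Fin t, M w i₀ = true ∧ ∀ j ∈ D, M w j = false) ∧
    (∀ e ∈ E, ∃ u ∈ D, u ∈ e ∧ (∀ e' ∈ E, e' ≠ e → u ∉ e') ∧
        ∃ w : Fin t, M w u = true ∧
          ∀ j : Fin n, (∃ e' ∈ E, e' ≠ e ∧ j ∈ e') → M w j = false) := by
  constructor
  · intro i₀ hi₀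
    obtain ⟨w, hw1, hw0⟩ := hM E hES hEcard i₀ hi₀
    exact ⟨w, hw1, fun j hj => hw0 j (hcover j hj)⟩
  · intro e he
    have hsub : E.erase e ⊂ E := Finset.erase_ssubset he
    obtain ⟨u, hu, hnc⟩ := by
      have := hmin (E.erase e) hsub
      push_neg at this
      exact this
    have huE : ∀ e' ∈ E, e' ≠ e → u ∉ e' := by
      intro e' he' hne hue'
      exact hnc e' (Finset.mem_erase.mpr ⟨hne, he'⟩) hue'
    have hue : u ∈ e := by
      obtain ⟨f, hf, huf⟩ := hcover u hu
      by_contra h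
      exact huE f hf (fun hfe => h (hfe ▸ huf)) huf
    obtain ⟨w, hw1, hw0⟩ := hM (E.erase e) (fun x hx => hES (Finset.mem_of_mem_erase hx))
      (le_trans (Finset.card_le_card hsub.subset) hEcard) u
      (fun e' he' => huE e' (Finset.mem_of_mem_erase he') (Finset.ne_of_mem_erase he'))
    refine ⟨u, hu, hue, huE, w, hw1, ?_⟩
    rintro j ⟨e', he', hne, hje'⟩
    exact hw0 j ⟨e', Finset.mem_erase.mpr ⟨hne, he'⟩, hje'⟩
end

section
/- Let H=([1,n],S) be a hypergraph whose edge set S consists of m pairwise disjoint edges, each of cardinality at most d, whose union is [1,n] (a partition of [1,n]). Let A be a 1-CFF(t₁,m) matrix whose columns are indexed by the m edges. Let M₁ be the t₁×n matrix in which, for every vertex i belonging to edge j, column i of M₁ equals column j of A. Let M₂ be the d×n matrix in which, for every edge E = {v₁,…,v_{|E|}} ∈ S (with vertices listed in some fixed order), the column of v_x has a 1 in row x and 0 in all other rows (1 ≤ x ≤ |E|). Let M be the (t₁+d)×n vertical concatenation of M₁ and M₂. Then M₁ is an (S,1)-ECFF(t₁,n) and M is an (S,1)-CFF(t₁+d,n).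 -/
/-- Sperner-type construction for non-overlapping edges (`r = 1`, unlimited row weight):
for a hypergraph given by `m` pairwise disjoint edges of size at most `d` partitioning the
vertex set, placing a `1`-CFF on the edges (matrix `M₁`, columns repeated within each edge)
gives an `(S,1)`-ECFF, and vertically concatenating identity blocks under each edge
(matrix `M₂`, encoded by a position function injective on each edge) gives an
`(S,1)`-structure-aware CFF with `t₁ + d` rows. -/
theorem stmt6 (d t₁ n m : ℕ)
    (S : Finset (Finset (Fin n))) (hScard : S.card = m)
    (hdisj : ∀ e ∈ S, ∀ e' ∈ S, e ≠ e' → Disjoint e e')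
    (hsize : ∀ e ∈ S, e.card ≤ d)
    (edge : Fin n → Finset (Fin n))
    (hedge : ∀ i : Fin n, edge i ∈ S ∧ i ∈ edge i)
    (A : Fin t₁ → {e // e ∈ S} → Bool) (hA : IsCFF 1 A)
    (pos : Fin n → Fin d)
    (hpos : ∀ e ∈ S, ∀ i ∈ e, ∀ j ∈ e, pos i = pos j → i = j)
    (M₁ : Fin t₁ → Fin n → Bool)
    (hM₁ : ∀ w i, M₁ w i = A w ⟨edge i, (hedge i).1⟩)
    (M₂ : Fin d → Fin n → Bool)
    (hM₂ : ∀ x i, M₂ x i = decide (pos i = x))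
    (M : Fin t₁ ⊕ Fin d → Fin n → Bool)
    (hMl : ∀ w i, M (Sum.inl w) i = M₁ w i)
    (hMr : ∀ x i, M (Sum.inr x) i = M₂ x i) :
    IsECFF 1 S M₁ ∧ IsSCFF 1 S M := by
  have edge_eq : ∀ (j : Fin n) (e : Finset (Fin n)), e ∈ S → j ∈ e → edge j = e := by
    intro j e he hj
    by_contra hne
    exact Finset.disjoint_left.1 (hdisj _ (hedge j).1 _ he hne) (hedge j).2 hj
  have hECFF : IsECFF 1 S M₁ := by
    intro E hES hcard i₀ hi₀
    rcases Finset.card_le_one_iff_subset_singleton.1 hcard with ⟨e, hEe⟩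
    by_cases heE : e ∈ E
    · have heS : e ∈ S := hES heE
      have hne : edge i₀ ≠ e := fun h => hi₀ e heE (h ▸ (hedge i₀).2)
      obtain ⟨w, hw1, hw0⟩ := hA ⟨edge i₀, (hedge i₀).1⟩ {⟨e, heS⟩} (by simp)
        (by simp [Subtype.ext_iff, hne])
      refine ⟨w, by rw [hM₁]; exact hw1, ?_⟩
      rintro j ⟨e', he'E, hje'⟩
      have : e' = e := by
        have := hEe he'E; simpa using this
      rw [hM₁]
      convert hw0 ⟨e, heS⟩ (Finset.mem_singleton_self _) using 2
      exact Subtype.ext (edge_eq j e heS (this ▸ hje'))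
    · have hEempty : E = ∅ := by
        ext x; simp only [Finset.notMem_empty, iff_false]
        intro hx
        have := hEe hx; simp at this
        exact heE (this ▸ hx)
      obtain ⟨w, hw1, _⟩ := hA ⟨edge i₀, (hedge i₀).1⟩ ∅ (by simp) (by simp)
      refine ⟨w, by rw [hM₁]; exact hw1, ?_⟩
      rintro j ⟨e', he'E, -⟩
      simp [hEempty] at he'E
  refine ⟨hECFF, ?_⟩
  intro E hES hcard I hI i₀ hi₀
  rcases Finset.card_le_one_iff_subset_singleton.1 hcard with ⟨e, hEe⟩
  by_cases hi₀e : ∃ e' ∈ E, i₀ ∈ e'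
  · obtain ⟨e', he'E, hi₀e'⟩ := hi₀e
    have he'S : e' ∈ S := hES he'E
    refine ⟨Sum.inr (pos i₀), by rw [hMr, hM₂]; simp, ?_⟩
    intro j hjI
    obtain ⟨e'', he''E, hje''⟩ := hI j hjI
    have h1 : e' = e := by have := hEe he'E; simpa using this
    have h2 : e'' = e := by have := hEe he''E; simpa using this
    rw [hMr, hM₂]
    simp only [decide_eq_false_iff_not]
    intro hposeq
    exact hi₀ ((hpos e' he'S _ hi₀e' _ (h1 ▸ h2 ▸ hje'') hposeq.symm) ▸ hjI)
  · push_neg at hi₀e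
    obtain ⟨w, hw1, hw0⟩ := hECFF E hES hcard i₀ hi₀e
    refine ⟨Sum.inl w, by rw [hMl]; exact hw1, ?_⟩
    intro j hjI
    rw [hMl]
    exact hw0 j (hI j hjI)
end

section
/- Let A₁ be a d-CFF(t₁,n₁) and A₂ be a d-CFF(t₂,n₂). Then the Kronecker product C = A₁ ⊗ A₂ is a d-CFF(t₁t₂, n₁n₂). -/
/-- The Kronecker product of a `d`-CFF(t₁,n₁) and a `d`-CFF(t₂,n₂) is a
`d`-CFF(t₁t₂, n₁n₂). -/
theorem stmt8 (d t₁ n₁ t₂ n₂ : ℕ)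
    (A₁ : Fin t₁ → Fin n₁ → Bool) (A₂ : Fin t₂ → Fin n₂ → Bool)
    (h₁ : IsCFF d A₁) (h₂ : IsCFF d A₂)
    (C : Fin t₁ × Fin t₂ → Fin n₁ × Fin n₂ → Bool)
    (hC : ∀ w v, C w v = (A₁ w.1 v.1 && A₂ w.2 v.2)) :
    IsCFF d C := by
  rintro ⟨a, b⟩ I hcard hnotin
  set I₁ : Finset (Fin n₁) := (I.filter (fun p => p.1 ≠ a)).image Prod.fst with hI₁
  set I₂ : Finset (Fin n₂) := (I.filter (fun p => p.1 = a)).image Prod.snd with hI₂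
  have hc1 : I₁.card ≤ d :=
    le_trans (le_trans (Finset.card_image_le) (Finset.card_filter_le _ _)) hcard
  have hc2 : I₂.card ≤ d :=
    le_trans (le_trans (Finset.card_image_le) (Finset.card_filter_le _ _)) hcard
  have ha : a ∉ I₁ := by
    simp only [hI₁, Finset.mem_image, Finset.mem_filter]
    rintro ⟨p, ⟨-, hp⟩, rfl⟩; exact hp rfl
  have hb : b ∉ I₂ := by
    simp only [hI₂, Finset.mem_image, Finset.mem_filter]
    rintro ⟨⟨p1, p2⟩, ⟨hpI, hp⟩, rfl⟩
    simp only at hp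
    subst hp
    exact hnotin hpI
  obtain ⟨w₁, hw₁, hw₁'⟩ := h₁ a I₁ hc1 ha
  obtain ⟨w₂, hw₂, hw₂'⟩ := h₂ b I₂ hc2 hb
  refine ⟨(w₁, w₂), ?_, ?_⟩
  · rw [hC]; simp [hw₁, hw₂]
  · rintro ⟨x, y⟩ hxy
    rw [hC]
    by_cases hx : x = a
    · have : y ∈ I₂ := by
        simp only [hI₂, Finset.mem_image, Finset.mem_filter]
        exact ⟨(x, y), ⟨hxy, hx⟩, rfl⟩
      simp [hw₂' y this]
    · have : x ∈ I₁ := by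
        simp only [hI₁, Finset.mem_image, Finset.mem_filter]
        exact ⟨(x, y), ⟨hxy, hx⟩, rfl⟩
      simp [hw₁' x this]
end

section
/- Let k, m, r ≥ 1, let n = k·m, and let H=([1,n],S) be the hypergraph whose edges are the m pairwise disjoint consecutive blocks of k vertices, S_j = {(j−1)k+1, …, jk} for 1 ≤ j ≤ m. Let A be an r-CFF(t,m). Then A ⊗ R_k is an (S,r)-ECFF(t, km) and A ⊗ I_k is an (S,r)-CFF(kt, km). -/
/-- For the hypergraph on `n = k·m` vertices (encoded as pairs `(block, position)`) whose
edges are the `m` disjoint blocks of `k` vertices, and an `r`-CFF(t,m) matrix `A`: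
`A ⊗ R_k` is an `(S,r)`-ECFF(t, km) and `A ⊗ I_k` is an `(S,r)`-structure-aware
CFF(kt, km). -/
theorem stmt9 (k m r t : ℕ) (hk : 1 ≤ k) (hm : 1 ≤ m) (hr : 1 ≤ r)
    (S : Finset (Finset (Fin m × Fin k)))
    (hS : S = Finset.univ.image (fun j : Fin m =>
        Finset.univ.filter (fun v : Fin m × Fin k => v.1 = j)))
    (A : Fin t → Fin m → Bool) (hA : IsCFF r A)
    (AR : Fin t → Fin m × Fin k → Bool)
    (hAR : ∀ w v, AR w v = A w v.1)
    (AI : Fin t × Fin k → Fin m × Fin k → Bool)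
    (hAI : ∀ w v, AI w v = (A w.1 v.1 && decide (w.2 = v.2))) :
    IsECFF r S AR ∧ IsSCFF r S AI := by
  classical
  set B : Fin m → Finset (Fin m × Fin k) :=
    fun j => Finset.univ.filter (fun v : Fin m × Fin k => v.1 = j) with hB
  have hmemB : ∀ (j : Fin m) (v : Fin m × Fin k), v ∈ B j ↔ v.1 = j := by
    intro j v; simp [hB]
  have hBinj : Function.Injective B := by
    intro a b h
    have : ((a, (⟨0, hk⟩ : Fin k)) : Fin m × Fin k) ∈ B b := by
      rw [← h, hmemB]
    simpa [hmemB] using this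
  -- block set of E
  have key : ∀ E : Finset (Finset (Fin m × Fin k)), E ⊆ S →
      ((Finset.univ.filter (fun j : Fin m => B j ∈ E)).card ≤ E.card ∧
       (∀ e ∈ E, ∃ j, e = B j ∧ j ∈ Finset.univ.filter (fun j : Fin m => B j ∈ E))) := by
    intro E hE
    constructor
    · have himg : (Finset.univ.filter (fun j : Fin m => B j ∈ E)).image B ⊆ E := by
        intro b hb
        obtain ⟨j, hj, rfl⟩ := Finset.mem_image.mp hb
        exact (Finset.mem_filter.mp hj).2
      calc (Finset.univ.filter (fun j : Fin m => B j ∈ E)).card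
          = ((Finset.univ.filter (fun j : Fin m => B j ∈ E)).image B).card :=
            (Finset.card_image_of_injective _ hBinj).symm
        _ ≤ E.card := Finset.card_le_card himg
    · intro e he
      have := hE he
      rw [hS] at this
      obtain ⟨j, _, hj⟩ := Finset.mem_image.mp this
      exact ⟨j, hj.symm, Finset.mem_filter.mpr ⟨Finset.mem_univ _, hj ▸ he⟩⟩
  constructor
  · -- ECFF for AR
    intro E hE hEr i₀ hi₀
    set J := Finset.univ.filter (fun j : Fin m => B j ∈ E) with hJ
    obtain ⟨hJcard, hJrep⟩ := key E hE
    have hnotin : i₀.1 ∉ J := by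
      intro h
      have hBE := (Finset.mem_filter.mp h).2
      exact hi₀ _ hBE ((hmemB i₀.1 i₀).mpr rfl)
    obtain ⟨w, hw1, hw2⟩ := hA i₀.1 J (hJcard.trans hEr) hnotin
    refine ⟨w, by rw [hAR]; exact hw1, ?_⟩
    rintro j ⟨e, heE, hje⟩
    obtain ⟨j', rfl, hj'⟩ := hJrep e heE
    have : j.1 = j' := (hmemB j' j).mp hje
    rw [hAR]
    exact this ▸ hw2 j' hj'
  · -- SCFF for AI
    intro E hE hEr I hI i₀ hi₀
    set J := Finset.univ.filter (fun j : Fin m => B j ∈ E) with hJ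
    obtain ⟨hJcard, hJrep⟩ := key E hE
    obtain ⟨w, hw1, hw2⟩ := hA i₀.1 (J.erase i₀.1)
      ((Finset.card_le_card (Finset.erase_subset _ _)).trans (hJcard.trans hEr))
      (Finset.notMem_erase _ _)
    refine ⟨(w, i₀.2), by simp [hAI, hw1], ?_⟩
    intro j hjI
    obtain ⟨e, heE, hje⟩ := hI j hjI
    obtain ⟨j', rfl, hj'⟩ := hJrep e heE
    have hj1 : j.1 = j' := (hmemB j' j).mp hje
    rw [hAI]
    by_cases hcase : j.1 = i₀.1
    · have : j.2 ≠ i₀.2 := by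
        intro h2
        exact hi₀ (by rwa [show i₀ = j from (Prod.ext hcase.symm h2.symm)])
      simp [this.symm]
    · have : j.1 ∈ J.erase i₀.1 := Finset.mem_erase.mpr ⟨hcase, hj1 ▸ hj'⟩
      simp [hw2 _ this]
end

section
/- Let d ≥ 2, let A₁ be a d-CFF(t₁,n₁), A₂ be a d-CFF(t₂,n₂), and B be a (d−1)-CFF(s,n₂). Let C be the vertical concatenation of B ⊗ A₁ (which is (s·t₁)×(n₂·n₁)) with A₂ ⊗ R_{n₁} (which is t₂×(n₂·n₁)). Then C is a d-CFF(s·t₁ + t₂, n₁·n₂). -/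
/-- Kronecker-type construction: for `d ≥ 2`, if `A₁` is a `d`-CFF(t₁,n₁), `A₂` a
`d`-CFF(t₂,n₂) and `B` a `(d-1)`-CFF(s,n₂), then the vertical concatenation of `B ⊗ A₁`
with `A₂ ⊗ R_{n₁}` is a `d`-CFF(s·t₁ + t₂, n₁·n₂). -/
theorem stmt10 (d s t₁ n₁ t₂ n₂ : ℕ) (hd : 2 ≤ d)
    (A₁ : Fin t₁ → Fin n₁ → Bool) (h₁ : IsCFF d A₁)
    (A₂ : Fin t₂ → Fin n₂ → Bool) (h₂ : IsCFF d A₂)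
    (B : Fin s → Fin n₂ → Bool) (hB : IsCFF (d - 1) B)
    (C : (Fin s × Fin t₁) ⊕ Fin t₂ → Fin n₂ × Fin n₁ → Bool)
    (hCl : ∀ w v, C (Sum.inl w) v = (B w.1 v.1 && A₁ w.2 v.2))
    (hCr : ∀ w v, C (Sum.inr w) v = A₂ w v.1) :
    IsCFF d C := by

  intro i₀ I hId hi₀
  obtain ⟨b₀, a₀⟩ := i₀
  by_cases hJ : ∃ j ∈ I, j.1 = b₀
  · set J : Finset (Fin n₁) := (I.filter (fun j => j.1 = b₀)).image Prod.snd with hJdef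
    set I₂ : Finset (Fin n₂) := (I.filter (fun j => ¬ j.1 = b₀)).image Prod.fst with hI₂def
    have hJcard : J.card ≤ d :=
      le_trans (le_trans Finset.card_image_le (Finset.card_filter_le _ _)) hId
    have ha₀ : a₀ ∉ J := by
      simp only [hJdef, Finset.mem_image, Finset.mem_filter]
      rintro ⟨⟨jb, ja⟩, ⟨hjI, hjb⟩, hja⟩
      exact hi₀ (by simp only at hjb hja; rw [← hjb, ← hja]; exact hjI)
    have hI₂card : I₂.card ≤ d - 1 := by
      obtain ⟨j, hjI, hjb⟩ := hJ
      have h1 : 1 ≤ (I.filter (fun j => j.1 = b₀)).card :=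
        Finset.card_pos.mpr ⟨j, Finset.mem_filter.mpr ⟨hjI, hjb⟩⟩
      have h2 : (I.filter (fun j => j.1 = b₀)).card
          + (I.filter (fun j => ¬ j.1 = b₀)).card = I.card :=
        Finset.card_filter_add_card_filter_not _
      have h3 : I₂.card ≤ (I.filter (fun j => ¬ j.1 = b₀)).card := Finset.card_image_le
      omega
    have hb₀ : b₀ ∉ I₂ := by
      simp only [hI₂def, Finset.mem_image, Finset.mem_filter]
      rintro ⟨j, ⟨_, hne⟩, h⟩
      exact hne h
    obtain ⟨wB, hwB1, hwB0⟩ := hB b₀ I₂ hI₂card hb₀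
    obtain ⟨wA, hwA1, hwA0⟩ := h₁ a₀ J hJcard ha₀
    refine ⟨Sum.inl (wB, wA), by simp [hCl, hwB1, hwA1], ?_⟩
    rintro ⟨jb, ja⟩ hj
    rw [hCl]
    by_cases h : jb = b₀
    · subst h
      have hm : ja ∈ J :=
        Finset.mem_image.mpr ⟨(jb, ja), Finset.mem_filter.mpr ⟨hj, rfl⟩, rfl⟩
      simp [hwA0 _ hm]
    · have hm : jb ∈ I₂ :=
        Finset.mem_image.mpr ⟨(jb, ja), Finset.mem_filter.mpr ⟨hj, h⟩, rfl⟩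
      simp [hwB0 _ hm]
  · push_neg at hJ
    have hcard : (I.image Prod.fst).card ≤ d := le_trans Finset.card_image_le hId
    have hb₀ : b₀ ∉ I.image Prod.fst := by
      simp only [Finset.mem_image]
      rintro ⟨j, hjI, hj1⟩
      exact hJ j hjI hj1
    obtain ⟨w, hw1, hw0⟩ := h₂ b₀ _ hcard hb₀
    refine ⟨Sum.inr w, by simp [hCr, hw1], ?_⟩
    intro j hj
    rw [hCr]
    exact hw0 _ (Finset.mem_image_of_mem _ hj)
end

section
/- Let k, m ≥ 1, r ≥ 1, let n = k·m, and let H=([1,n],S) be the hypergraph whose edges are the m pairwise disjoint consecutive blocks of k vertices, S_j = {(j−1)k+1, …, jk} for 1 ≤ j ≤ m. Let A be an r-CFF(t_A,m) and B be an (r−1)-CFF(t_B,m). Then the vertical concatenation of A ⊗ R_k with B ⊗ I_k is an (S,r)-CFF(t_A + k·t_B, km). -/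
/-- For the hypergraph on `n = k·m` vertices (encoded as pairs `(block, position)`) whose
edges are the `m` disjoint blocks of `k` vertices, given an `r`-CFF(t_A,m) matrix `A` and
an `(r-1)`-CFF(t_B,m) matrix `B`, the vertical concatenation of `A ⊗ R_k` with `B ⊗ I_k`
is an `(S,r)`-structure-aware CFF(t_A + k·t_B, km). -/
theorem stmt11 (k m r tA tB : ℕ) (hk : 1 ≤ k) (hm : 1 ≤ m) (hr : 1 ≤ r)
    (S : Finset (Finset (Fin m × Fin k)))
    (hS : S = Finset.univ.image (fun j : Fin m =>
        Finset.univ.filter (fun v : Fin m × Fin k => v.1 = j)))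
    (A : Fin tA → Fin m → Bool) (hA : IsCFF r A)
    (B : Fin tB → Fin m → Bool) (hB : IsCFF (r - 1) B)
    (C : Fin tA ⊕ (Fin tB × Fin k) → Fin m × Fin k → Bool)
    (hCl : ∀ w v, C (Sum.inl w) v = A w v.1)
    (hCr : ∀ w v, C (Sum.inr w) v = (B w.1 v.1 && decide (w.2 = v.2))) :
    IsSCFF r S C := by
  intro E hES hEr I hIE i₀ hi₀
  set J := I.image Prod.fst with hJ
  have hblock : ∀ j ∈ J, (Finset.univ.filter (fun v : Fin m × Fin k => v.1 = j)) ∈ E := by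
    intro j hj
    rw [hJ, Finset.mem_image] at hj
    obtain ⟨i, hiI, rfl⟩ := hj
    obtain ⟨e, heE, hie⟩ := hIE i hiI
    have hes := hES heE
    rw [hS, Finset.mem_image] at hes
    obtain ⟨j', -, rfl⟩ := hes
    have : i.1 = j' := by simpa using hie
    rw [this]; exact heE
  have hJcard : J.card ≤ r := by
    refine le_trans (Finset.card_le_card_of_injOn
      (fun j => Finset.univ.filter (fun v : Fin m × Fin k => v.1 = j)) hblock ?_) hEr
    intro a _ b _ hab
    simp only [Finset.ext_iff, Finset.mem_filter, Finset.mem_univ, true_and] at hab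
    exact (hab ((a, (⟨0, hk⟩ : Fin k)))).mp rfl
  by_cases hcase : i₀.1 ∈ J
  · obtain ⟨w, hw1, hw2⟩ := hB i₀.1 (J.erase i₀.1)
      (le_trans (by rw [Finset.card_erase_of_mem hcase]) (Nat.sub_le_sub_right hJcard 1))
      (Finset.notMem_erase _ _)
    refine ⟨Sum.inr (w, i₀.2), ?_, ?_⟩
    · rw [hCr]; simp [hw1]
    · intro j hjI
      rw [hCr]
      by_cases hj1 : j.1 = i₀.1
      · have : i₀.2 ≠ j.2 := by
          intro h2
          exact hi₀ (by rwa [← show i₀ = j from Prod.ext hj1.symm h2] at hjI)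
        simp [this]
      · have : j.1 ∈ J.erase i₀.1 :=
          Finset.mem_erase.mpr ⟨hj1, Finset.mem_image_of_mem _ hjI⟩
        simp [hw2 _ this]
  · obtain ⟨w, hw1, hw2⟩ := hA i₀.1 J hJcard hcase
    refine ⟨Sum.inl w, ?_, ?_⟩
    · rw [hCl]; exact hw1
    · intro j hjI
      rw [hCl]
      exact hw2 _ (Finset.mem_image_of_mem _ hjI)
end

section
/- Let n, k ≥ 1 and let A be the [n]^k-hypercube group testing matrix: its columns are indexed by vectors x ∈ (ℤ/n)^k, its rows by pairs (v,a) with 1 ≤ v ≤ k and a ∈ ℤ/n, and A[(v,a),x] = 1 if and only if x_v = a. For each v, let S_v be the set of edges {x : x_u = a_u for all u ≠ v}, one for each choice of values (a_u)_{u≠v} ∈ (ℤ/n)^{k−1} (the lines in direction v), and let S = S₁ ∪ ⋯ ∪ S_k. Then: (a) for every v, A is an (S_v,1)-CFF(kn, n^k); (b) A is an (S,1)-CFF(kn, n^k); and (c) if k = 2, then for each v, A is an (S_v, n)-ECFF(2n, n²), where n = |S_v|. -/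

lemma line_cff {n k : ℕ} [NeZero n]
    (A : Fin k × ZMod n → (Fin k → ZMod n) → Bool)
    (hA : ∀ w x, A w x = decide (x w.1 = w.2)) (v : Fin k) (b : Fin k → ZMod n)
    (I : Finset (Fin k → ZMod n)) (hI : ∀ j ∈ I, ∀ u, u ≠ v → j u = b u)
    (i₀ : Fin k → ZMod n) (h0 : i₀ ∉ I) :
    ∃ w, A w i₀ = true ∧ ∀ j ∈ I, A w j = false := by
  by_cases hc : ∀ u, u ≠ v → i₀ u = b u
  · refine ⟨(v, i₀ v), by simp [hA], fun j hj => ?_⟩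
    simp only [hA, decide_eq_false_iff_not]
    intro hjv
    apply h0
    have : j = i₀ := funext fun u => by
      by_cases hu : u = v
      · subst hu; exact hjv
      · rw [hI j hj u hu, hc u hu]
    rwa [← this]
  · push_neg at hc
    obtain ⟨u, hu, hne⟩ := hc
    refine ⟨(u, i₀ u), by simp [hA], fun j hj => ?_⟩
    simp only [hA, decide_eq_false_iff_not]
    intro hju
    exact hne (hju ▸ hI j hj u hu)

lemma fin2_ne {a b : Fin 2} (h : a ≠ b) : a = b + 1 := by
  revert h; revert a b; decide

/-- The `[n]^k`-hypercube group testing matrix `A` (rows indexed by pairs `(v,a)`, columns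
by vectors `x ∈ (ℤ/n)^k`, with a 1 iff `x_v = a`): (a) for every direction `v`, `A` is an
`(S_v,1)`-structure-aware CFF, where `S_v` is the set of lines in direction `v`;
(b) `A` is an `(S,1)`-structure-aware CFF for `S = S₁ ∪ ⋯ ∪ S_k`;
(c) if `k = 2`, then `A` is an `(S_v, n)`-ECFF for each `v` (here `n = |S_v|`). -/
theorem stmt12 (n k : ℕ) [NeZero n] (hk : 1 ≤ k)
    (A : Fin k × ZMod n → (Fin k → ZMod n) → Bool)
    (hA : ∀ w x, A w x = decide (x w.1 = w.2))
    (Sv : Fin k → Finset (Finset (Fin k → ZMod n)))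
    (hSv : ∀ v, Sv v = Finset.univ.image (fun b : Fin k → ZMod n =>
        Finset.univ.filter (fun x : Fin k → ZMod n => ∀ u : Fin k, u ≠ v → x u = b u)))
    (S : Finset (Finset (Fin k → ZMod n)))
    (hS : S = Finset.univ.biUnion Sv) :
    (∀ v : Fin k, IsSCFF 1 (Sv v) A) ∧
    IsSCFF 1 S A ∧
    (k = 2 → ∀ v : Fin k, IsECFF n (Sv v) A) := by

  have key : ∀ (E : Finset (Finset (Fin k → ZMod n))), (∀ e ∈ E, ∃ v, e ∈ Sv v) →
      E.card ≤ 1 → ∀ I : Finset (Fin k → ZMod n), (∀ i ∈ I, ∃ e ∈ E, i ∈ e) →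
      ∀ i₀, i₀ ∉ I → ∃ w, A w i₀ = true ∧ ∀ j ∈ I, A w j = false := by
    intro E hE hE1 I hI i₀ h0
    rcases I.eq_empty_or_nonempty with rfl | ⟨i₁, hi₁⟩
    · exact ⟨(⟨0, hk⟩, i₀ ⟨0, hk⟩), by simp [hA], by simp⟩
    · obtain ⟨e, heE, hie⟩ := hI i₁ hi₁
      obtain ⟨v, hv⟩ := hE e heE
      rw [hSv v, Finset.mem_image] at hv
      obtain ⟨b, -, rfl⟩ := hv
      refine line_cff A hA v b I ?_ i₀ h0
      intro j hj u hu
      obtain ⟨e', he'E, hje'⟩ := hI j hj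
      have : e' = _ := Finset.card_le_one.mp hE1 e' he'E _ heE
      rw [this, Finset.mem_filter] at hje'
      exact hje'.2 u hu
  refine ⟨fun v E hE => key E (fun e he => ⟨v, hE he⟩),
    fun E hE => key E (fun e he => by
      have := hE he; rw [hS, Finset.mem_biUnion] at this
      obtain ⟨v, -, hv⟩ := this; exact ⟨v, hv⟩), ?_⟩
  rintro rfl v E hE hEn i₀ h0
  refine ⟨(v + 1, i₀ (v + 1)), by simp [hA], ?_⟩
  rintro j ⟨e, heE, hje⟩
  have he := hE heE
  rw [hSv v, Finset.mem_image] at he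
  obtain ⟨b, -, rfl⟩ := he
  have h0e := h0 _ heE
  rw [Finset.mem_filter] at hje h0e
  simp only [hA, decide_eq_false_iff_not]
  intro hju
  apply h0e
  refine ⟨Finset.mem_univ _, fun u hu => ?_⟩
  rw [fin2_ne hu, ← hju]
  exact hje.2 (v + 1) (by omega)
end

section
/- Let q be a prime power, k ≥ 1, and let F_q be the finite field with q elements. Let M be the 0-1 matrix whose rows are indexed by pairs (x,y) ∈ F_q × F_q, whose columns are indexed by the polynomials f ∈ F_q[X] of degree at most k, and with M[(x,y),f] = 1 if and only if f(x) = y. Then for every integer d with 1 ≤ d ≤ (q−1)/k, M is a d-CFF(q², q^{k+1}). -/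
/-- Polynomial construction of CFFs (Erdős et al.): over a finite field `F` with `q`
elements, the matrix with rows indexed by pairs `(x,y) ∈ F × F`, columns indexed by
polynomials of degree at most `k`, and a 1 iff `f(x) = y`, is a `d`-CFF(q², q^{k+1})
for every `d` with `1 ≤ d ≤ (q-1)/k` (i.e. `d·k ≤ q-1`). -/
theorem stmt13 (q k d : ℕ) (hk : 1 ≤ k) (hd : 1 ≤ d)
    (F : Type*) [Field F] [Fintype F] [DecidableEq F]
    (hq : Fintype.card F = q)
    (hdk : d * k ≤ q - 1)
    (M : F × F → {p : Polynomial F // p.natDegree ≤ k} → Bool)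
    (hM : ∀ w p, M w p = decide (Polynomial.eval w.1 p.1 = w.2)) :
    IsCFF d M ∧ Nat.card {p : Polynomial F // p.natDegree ≤ k} = q ^ (k + 1) := by
  constructor
  · intro f I hIcard hfI
    -- bad x's: where some g ∈ I agrees with f
    set B : Finset F := I.biUnion (fun g => (f.1 - g.1).roots.toFinset) with hB
    have hcard : B.card ≤ d * k := by
      calc B.card ≤ I.sum (fun g => (f.1 - g.1).roots.toFinset.card) :=
            Finset.card_biUnion_le
        _ ≤ I.sum (fun _ => k) := by
            apply Finset.sum_le_sum
            intro g hg
            have hne : f.1 - g.1 ≠ 0 := by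
              intro h
              apply hfI
              have : f.1 = g.1 := by linear_combination (norm := ring_nf) h
              have : f = g := Subtype.ext this
              rwa [this]
            calc (f.1 - g.1).roots.toFinset.card ≤ (f.1 - g.1).roots.card :=
                  Multiset.toFinset_card_le _
              _ ≤ (f.1 - g.1).natDegree := (Polynomial.card_roots' _)
              _ ≤ k := le_trans (Polynomial.natDegree_sub_le _ _) (max_le f.2 g.2)
        _ = I.card * k := by rw [Finset.sum_const, smul_eq_mul]
        _ ≤ d * k := Nat.mul_le_mul_right k hIcard
    have hqpos : 0 < q := by
      rw [← hq]; exact Fintype.card_pos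
    have hlt : B.card < Fintype.card F := by
      rw [hq]
      calc B.card ≤ d * k := hcard
        _ ≤ q - 1 := hdk
        _ < q := Nat.sub_lt hqpos one_pos
    obtain ⟨x, hx⟩ : ∃ x : F, x ∉ B := by
      by_contra h
      push_neg at h
      have : B = Finset.univ := Finset.eq_univ_iff_forall.2 h
      rw [this, Finset.card_univ] at hlt
      exact lt_irrefl _ hlt
    refine ⟨(x, Polynomial.eval x f.1), ?_, ?_⟩
    · rw [hM]; simp
    · intro g hg
      rw [hM]
      simp only [decide_eq_false_iff_not]
      intro hgx
      apply hx
      rw [hB]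
      apply Finset.mem_biUnion.2
      refine ⟨g, hg, ?_⟩
      have hne : f.1 - g.1 ≠ 0 := by
        intro h
        apply hfI
        have : f.1 = g.1 := by linear_combination (norm := ring_nf) h
        have : f = g := Subtype.ext this
        rwa [this]
      simp only [Multiset.mem_toFinset, Polynomial.mem_roots hne, Polynomial.IsRoot,
        Polynomial.eval_sub]
      simp [hgx]
  · have e1 : {p : Polynomial F // p.natDegree ≤ k} ≃ Polynomial.degreeLT F (k + 1) := by
      apply Equiv.subtypeEquiv (Equiv.refl _)
      intro p
      simp only [Equiv.refl_apply, Polynomial.mem_degreeLT]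
      by_cases hp : p = 0
      · simp only [hp, Polynomial.natDegree_zero, Polynomial.degree_zero, Nat.zero_le, true_iff]
        exact WithBot.bot_lt_coe _
      · rw [← Polynomial.natDegree_lt_iff_degree_lt hp, Nat.lt_succ_iff]
    have e2 := Polynomial.degreeLTEquiv F (k + 1)
    rw [Nat.card_congr (e1.trans e2.toEquiv)]
    simp [hq]
end

section
/- Let q be a prime power, k ≥ 1, d ≥ 1 with q ≥ dk+1, and fix an enumeration e₁,…,e_q of the finite field F_q. Let M be the 0-1 matrix whose rows are indexed by pairs (x,y) ∈ F_q × F_q, whose columns are indexed by the polynomials f ∈ F_q[X] of degree at most k, with M[(x,y),f] = 1 iff f(x) = y. For any d′ with 1 ≤ d′ ≤ d, the restriction of M to the rows {(e_i, y) : 1 ≤ i ≤ d′k+1, y ∈ F_q} is a d′-CFF((d′k+1)q, q^{k+1}). -/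
/-- Restriction of the polynomial-construction CFF to its first `d'k+1` blocks of rows:
with `q ≥ dk+1` and `1 ≤ d' ≤ d`, the restricted matrix is a `d'`-CFF((d'k+1)q, q^{k+1}). -/
theorem stmt14 (q k d d' : ℕ) (hk : 1 ≤ k) (hd : 1 ≤ d) (hq : d * k + 1 ≤ q)
    (hd' : 1 ≤ d') (hd'd : d' ≤ d)
    (F : Type*) [Field F] [Fintype F] [DecidableEq F]
    (hcard : Fintype.card F = q)
    (e : Fin q → F) (he : Function.Bijective e)
    (hle : d' * k + 1 ≤ q)
    (M' : Fin (d' * k + 1) × F → {p : Polynomial F // p.natDegree ≤ k} → Bool)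
    (hM' : ∀ w p, M' w p = decide (Polynomial.eval (e (Fin.castLE hle w.1)) p.1 = w.2)) :
    IsCFF d' M' := by
  intro p₀ I hIcard hp₀I
  -- bad x values
  set bad : Finset F := I.biUnion (fun p => (p₀.1 - p.1).roots.toFinset) with hbad
  have hbadcard : bad.card ≤ d' * k := by
    calc bad.card ≤ I.sum (fun p => (p₀.1 - p.1).roots.toFinset.card) :=
          Finset.card_biUnion_le
      _ ≤ I.sum (fun _ => k) := by
          refine Finset.sum_le_sum (fun p _ => ?_)
          refine le_trans (Multiset.toFinset_card_le _) ?_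
          refine le_trans (Polynomial.card_roots' _) ?_
          exact le_trans (Polynomial.natDegree_sub_le _ _) (max_le p₀.2 p.2)
      _ = I.card * k := by rw [Finset.sum_const, smul_eq_mul]
      _ ≤ d' * k := Nat.mul_le_mul_right _ hIcard
  set good : Finset F := Finset.image (fun i : Fin (d' * k + 1) => e (Fin.castLE hle i)) Finset.univ with hgood
  have hgoodcard : good.card = d' * k + 1 := by
    rw [hgood, Finset.card_image_of_injective _ (fun a b hab => by
      have := he.injective hab
      exact Fin.castLE_injective hle this), Finset.card_univ, Fintype.card_fin]
  have hex : ∃ x ∈ good, x ∉ bad := by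
    by_contra h
    push_neg at h
    have : good ⊆ bad := h
    have := Finset.card_le_card this
    omega
  obtain ⟨x, hxg, hxb⟩ := hex
  obtain ⟨i, _, hi⟩ := Finset.mem_image.mp hxg
  refine ⟨(i, p₀.1.eval x), ?_, ?_⟩
  · rw [hM', decide_eq_true_iff]; simp [hi]
  · intro p hpI
    rw [hM', decide_eq_false_iff_not]
    simp only [hi]
    intro hpe
    apply hxb
    rw [hbad]
    refine Finset.mem_biUnion.mpr ⟨p, hpI, ?_⟩
    rw [Multiset.mem_toFinset, Polynomial.mem_roots']
    refine ⟨fun h0 => hp₀I ?_, by simp [Polynomial.IsRoot, hpe]⟩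
    have : p₀ = p := Subtype.ext (sub_eq_zero.mp h0)
    rwa [this]
end

section
/- Let k ≥ 1 and let q be a prime power with q ≥ k+1; fix an enumeration e₁,…,e_q of F_q. Let M be the 0-1 matrix whose rows are indexed by pairs (e_i, y) with 1 ≤ i ≤ k+1 and y ∈ F_q, whose columns are indexed by the polynomials p ∈ F_q[X] of degree at most k, with M[(e_i,y),p] = 1 iff p(e_i) = y. Let S be the partition of the columns into the q^k blocks S_{(i₁,…,i_k)} = { p : p(e_j) = e_{i_j} for 1 ≤ j ≤ k }, for (i₁,…,i_k) ∈ [1,q]^k; each block has exactly q elements. Then M is an (S,1)-CFF((k+1)q, q^{k+1}). Moreover, if k = 1, then M is also an (S,q)-ECFF(2q, q²). -/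
open Polynomial in
lemma aux_poly_coeff15 {F : Type*} [Field F] {k : ℕ} (c : Fin (k+1) → F) (i : Fin (k+1)) :
    (∑ j : Fin (k+1), C (c j) * X ^ (j:ℕ)).coeff (i:ℕ) = c i := by
  simp only [finset_sum_coeff, coeff_C_mul, coeff_X_pow, mul_ite, mul_one, mul_zero, Fin.val_inj]
  simp

open Polynomial in
lemma aux_poly_deg15 {F : Type*} [Field F] {k : ℕ} (c : Fin (k+1) → F) :
    (∑ j : Fin (k+1), C (c j) * X ^ (j:ℕ)).natDegree ≤ k := by
  refine natDegree_sum_le_of_forall_le _ _ fun j _ => ?_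
  refine (natDegree_C_mul_le _ _).trans ?_
  simpa using Nat.lt_succ_iff.mp j.isLt

open Polynomial in
lemma aux_poly_eval15 {F : Type*} [Field F] {k : ℕ} (c : Fin (k+1) → F) (x : F) :
    (∑ j : Fin (k+1), C (c j) * X ^ (j:ℕ)).eval x = ∑ j : Fin (k+1), c j * x ^ (j:ℕ) := by
  simp [eval_finset_sum]

lemma aux_unique15 {F : Type*} [Field F] {k : ℕ} (x : Fin (k+1) → F)
    (hx : Function.Injective x) (c c' : Fin (k+1) → F)
    (h : ∀ i, ∑ j : Fin (k+1), c j * x i ^ (j:ℕ) = ∑ j : Fin (k+1), c' j * x i ^ (j:ℕ)) :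
    c = c' := by
  set p := ∑ j : Fin (k+1), Polynomial.C (c j) * Polynomial.X ^ (j:ℕ) with hp
  set p' := ∑ j : Fin (k+1), Polynomial.C (c' j) * Polynomial.X ^ (j:ℕ) with hp'
  have hz : p - p' = 0 := by
    refine Polynomial.eq_zero_of_natDegree_lt_card_of_eval_eq_zero _ hx (fun i => ?_) ?_
    · rw [Polynomial.eval_sub, aux_poly_eval15, aux_poly_eval15, h i, sub_self]
    · refine lt_of_le_of_lt (Polynomial.natDegree_sub_le _ _) ?_
      simpa using max_lt (Nat.lt_succ_of_le (aux_poly_deg15 c))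
        (Nat.lt_succ_of_le (aux_poly_deg15 c'))
  have heq := sub_eq_zero.mp hz
  funext i
  rw [← aux_poly_coeff15 c i, ← aux_poly_coeff15 c' i, ← hp, ← hp', heq]

lemma aux_exists15 {F : Type*} [Field F] [DecidableEq F] {k : ℕ} (x : Fin (k+1) → F)
    (hx : Function.Injective x) (g : Fin (k+1) → F) :
    ∃ c : Fin (k+1) → F, ∀ i, ∑ j : Fin (k+1), c j * x i ^ (j:ℕ) = g i := by
  classical
  set p := Lagrange.interpolate Finset.univ x g with hpdef
  have hdeg : p.natDegree < k + 1 := by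
    have h1 : p.degree < ((Finset.univ : Finset (Fin (k+1))).card : WithBot ℕ) := by
      rw [Nat.cast_withBot]
      exact Lagrange.degree_interpolate_lt g hx.injOn
    rw [Finset.card_univ, Fintype.card_fin] at h1
    by_cases hp0 : p = 0
    · simp [hp0]
    · exact (Polynomial.natDegree_lt_iff_degree_lt hp0).mpr (by exact_mod_cast h1)
  refine ⟨fun j => p.coeff j, fun i => ?_⟩
  have hsum : (∑ j : Fin (k+1), Polynomial.C (p.coeff (j:ℕ)) * Polynomial.X ^ (j:ℕ)) = p := by
    conv_rhs => rw [p.as_sum_range' (k+1) hdeg]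
    rw [Fin.sum_univ_eq_sum_range (fun j => Polynomial.C (p.coeff j) * Polynomial.X ^ j)]
    simp [Polynomial.C_mul_X_pow_eq_monomial]
  have h2 := aux_poly_eval15 (fun j : Fin (k+1) => p.coeff (j:ℕ)) (x i)
  rw [hsum] at h2
  rw [← h2, Lagrange.eval_interpolate_at_node g hx.injOn (Finset.mem_univ i)]

/-- Structure-aware CFF from polynomials: columns are polynomials of degree at most `k`
over `F_q` (encoded by their coefficient vectors `c : Fin (k+1) → F`, with evaluation
`ev c x = Σ_j c_j x^j`), rows are pairs `(e_i, y)` for `1 ≤ i ≤ k+1`, `y ∈ F`, with a 1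
iff `p(e_i) = y`. The edges are the `q^k` blocks of the partition of the columns by the
values at `e₁, …, e_k`; each block has exactly `q` elements. Then `M` is an
`(S,1)`-structure-aware CFF((k+1)q, q^{k+1}), and if `k = 1` it is also an
`(S,q)`-ECFF(2q, q²). -/
theorem stmt15 (q k : ℕ) (hk : 1 ≤ k)
    (F : Type*) [Field F] [Fintype F] [DecidableEq F]
    (hcard : Fintype.card F = q) (hq : k + 1 ≤ q)
    (e : Fin q → F) (he : Function.Bijective e)
    (ev : (Fin (k + 1) → F) → F → F)
    (hev : ∀ c x, ev c x = ∑ j : Fin (k + 1), c j * x ^ (j : ℕ))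
    (M : Fin (k + 1) × F → (Fin (k + 1) → F) → Bool)
    (hM : ∀ w c, M w c = decide (ev c (e (Fin.castLE hq w.1)) = w.2))
    (S : Finset (Finset (Fin (k + 1) → F)))
    (hS : S = Finset.univ.image (fun v : Fin k → F =>
        Finset.univ.filter (fun c : Fin (k + 1) → F =>
          ∀ j : Fin k, ev c (e (Fin.castLE (Nat.le_of_succ_le hq) j)) = v j))) :
    (∀ s ∈ S, s.card = q) ∧
    IsSCFF 1 S M ∧
    (k = 1 → IsECFF q S M) := by
  subst hS
  classical
  set pts : Fin (k+1) → F := fun i => e (Fin.castLE hq i) with hpts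
  have hptsi : Function.Injective pts := fun a b hab =>
    Fin.castLE_injective hq (he.1 hab)
  have hM' : ∀ w c, M w c = decide (ev c (pts w.1) = w.2) := fun w c => hM w c
  have hptc : ∀ j : Fin k, e (Fin.castLE (Nat.le_of_succ_le hq) j) = pts (Fin.castSucc j) := by
    intro j
    simp only [hpts]
    congr 1
  have huniq : ∀ c c' : Fin (k+1) → F, (∀ i, ev c (pts i) = ev c' (pts i)) → c = c' := by
    intro c c' h
    refine aux_unique15 pts hptsi c c' fun i => ?_
    rw [← hev, ← hev]
    exact h i
  have hmem : ∀ (v : Fin k → F) (c : Fin (k+1) → F),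
      (c ∈ Finset.univ.filter (fun c : Fin (k+1) → F =>
        ∀ j : Fin k, ev c (e (Fin.castLE (Nat.le_of_succ_le hq) j)) = v j))
      ↔ ∀ j : Fin k, ev c (pts (Fin.castSucc j)) = v j := by
    intro v c
    simp only [Finset.mem_filter, Finset.mem_univ, true_and]
    constructor
    · intro h j; rw [← hptc j]; exact h j
    · intro h j; rw [hptc j]; exact h j
  refine ⟨?_, ?_, ?_⟩
  · -- cardinality of each block
    intro s hs
    obtain ⟨v, -, rfl⟩ := Finset.mem_image.mp hs
    refine (Finset.card_bij (t := (Finset.univ : Finset F))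
      (fun c _ => ev c (pts (Fin.last k))) (fun _ _ => Finset.mem_univ _)
      ?_ ?_).trans (by rw [Finset.card_univ, hcard])
    · intro c hc c' hc' hcc
      rw [hmem] at hc hc'
      refine huniq c c' fun i => ?_
      refine Fin.lastCases ?_ ?_ i
      · exact hcc
      · intro j; rw [hc j, hc' j]
    · intro y _
      obtain ⟨c, hc⟩ := aux_exists15 pts hptsi (Fin.snoc v y)
      have hc' : ∀ i, ev c (pts i) = (Fin.snoc v y : Fin (k+1) → F) i := fun i => by rw [hev]; exact hc i
      refine ⟨c, ?_, ?_⟩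
      · rw [hmem]; intro j; rw [hc' (Fin.castSucc j), Fin.snoc_castSucc]
      · show ev c (pts (Fin.last k)) = y
        rw [hc' (Fin.last k), Fin.snoc_last]
  · -- IsSCFF 1
    intro E hE hE1 I hI i₀ hi₀
    rcases Finset.eq_empty_or_nonempty I with rfl | ⟨i, hiI⟩
    · exact ⟨(0, ev i₀ (pts 0)), by rw [hM']; simp, by simp⟩
    · obtain ⟨s, hsE, his⟩ := hI i hiI
      have hEs : ∀ t ∈ E, t = s := fun t htE => Finset.card_le_one.mp hE1 t htE s hsE
      obtain ⟨v, -, rfl⟩ := Finset.mem_image.mp (hE hsE)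
      have hIs : ∀ j ∈ I, ∀ j' : Fin k, ev j (pts (Fin.castSucc j')) = v j' := by
        intro j hjI
        obtain ⟨t, htE, hjt⟩ := hI j hjI
        rw [hEs t htE] at hjt
        exact (hmem v j).mp hjt
      by_cases hcase : ∀ j' : Fin k, ev i₀ (pts (Fin.castSucc j')) = v j'
      · refine ⟨(Fin.last k, ev i₀ (pts (Fin.last k))), by rw [hM']; simp, ?_⟩
        intro j hjI
        rw [hM']
        simp only [decide_eq_false_iff_not]
        intro hcontra
        apply hi₀
        have hji : j = i₀ := by
          refine huniq j i₀ fun i' => ?_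
          refine Fin.lastCases ?_ ?_ i'
          · exact hcontra
          · intro j'; rw [hIs j hjI j', hcase j']
        rwa [← hji]
      · push_neg at hcase
        obtain ⟨j₀, hj₀⟩ := hcase
        refine ⟨(Fin.castSucc j₀, ev i₀ (pts (Fin.castSucc j₀))), by rw [hM']; simp, ?_⟩
        intro j hjI
        rw [hM']
        simp only [decide_eq_false_iff_not]
        intro hcontra
        exact hj₀ (hcontra.symm.trans (hIs j hjI j₀))
  · -- k = 1 → IsECFF q
    intro hk1
    subst hk1
    intro E hE hEr i₀ hi₀
    refine ⟨(0, ev i₀ (pts 0)), by rw [hM']; simp, ?_⟩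
    rintro j ⟨s, hsE, hjs⟩
    obtain ⟨v, -, rfl⟩ := Finset.mem_image.mp (hE hsE)
    have hj : ev j (pts (Fin.castSucc 0)) = v 0 := (hmem v j).mp hjs 0
    have hi₀' := hi₀ _ hsE
    rw [hmem] at hi₀'
    have hne : ev i₀ (pts (Fin.castSucc 0)) ≠ v 0 := by
      intro h
      exact hi₀' fun j' => by rw [Subsingleton.elim j' 0]; exact h
    rw [hM']
    simp only [decide_eq_false_iff_not]
    intro hcontra
    apply hne
    rw [show (Fin.castSucc (0 : Fin 1)) = (0 : Fin 2) from rfl]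
    rw [← hcontra]
    rw [← hj]
    rw [show (Fin.castSucc (0 : Fin 1)) = (0 : Fin 2) from rfl]
end

section
/- Let H=([1,n],S) be a hypergraph and let C₁,…,C_ℓ be the colour classes of an ℓ-edge-colouring of H (so for each i, the edges in C_i are pairwise disjoint, and S = C₁ ∪ ⋯ ∪ C_ℓ). For each i, let k_i = max{|A| : A ∈ C_i}, and let f_i = |C_i| if the edges of C_i cover [1,n] and f_i = |C_i| + 1 otherwise. Then, given a 1-CFF(t_i, f_i) for each 1 ≤ i ≤ ℓ, there exists an (S,1)-CFF(t, n) with t = Σ_{i=1}^{ℓ} (t_i + k_i), and there also exists an (S,1)-ECFF(Σ_{i=1}^{ℓ} t_i, n). -/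
private def rk {n : ℕ} (e : Finset (Fin n)) (v : Fin n) : ℕ :=
  (e.filter (fun u => u < v)).card

private lemma rk_lt {n : ℕ} {e : Finset (Fin n)} {v : Fin n} (hv : v ∈ e) :
    rk e v < e.card := by
  have hsub : e.filter (fun u => u < v) ⊂ e := by
    rw [Finset.ssubset_iff_of_subset (Finset.filter_subset _ e)]
    exact ⟨v, hv, by simp⟩
  exact Finset.card_lt_card hsub

private lemma rk_mono {n : ℕ} {e : Finset (Fin n)} {v w : Fin n} (hv : v ∈ e)
    (hlt : v < w) : rk e v < rk e w := by
  apply Finset.card_lt_card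
  rw [Finset.ssubset_iff_of_subset (Finset.monotone_filter_right e
    (fun u _ hu => hu.trans hlt))]
  exact ⟨v, by simp [hv, hlt], by simp⟩

private lemma rk_inj {n : ℕ} {e : Finset (Fin n)} {v w : Fin n} (hv : v ∈ e) (hw : w ∈ e)
    (h : rk e v = rk e w) : v = w := by
  rcases lt_trichotomy v w with hlt | heq | hlt
  · exact absurd h (rk_mono hv hlt).ne
  · exact heq
  · exact absurd h.symm (rk_mono hw hlt).ne

private lemma exists_phi {n m : ℕ} (s : Finset (Finset (Fin n)))
    (hdisj : ∀ e ∈ s, ∀ e' ∈ s, e ≠ e' → Disjoint e e')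
    (hm : m = if (∀ v : Fin n, ∃ e ∈ s, v ∈ e) then s.card else s.card + 1) :
    ∃ φ : Fin n → Fin m, ∀ e ∈ s, ∀ v ∈ e, ∀ w, φ w = φ v ↔ w ∈ e := by
  classical
  have huniq : ∀ {e e' : Finset (Fin n)} {v : Fin n}, e ∈ s → e' ∈ s → v ∈ e → v ∈ e' →
      e = e' := by
    intro e e' v he he' hv hv'
    by_contra hne
    exact Finset.disjoint_left.1 (hdisj e he e' he' hne) hv hv'
  by_cases hcov : ∀ v : Fin n, ∃ e ∈ s, v ∈ e
  · rw [if_pos hcov] at hm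
    subst hm
    refine ⟨fun v => s.equivFin ⟨(hcov v).choose, (hcov v).choose_spec.1⟩, ?_⟩
    intro e he v hv w
    beta_reduce
    have hgv : (hcov v).choose = e := huniq (hcov v).choose_spec.1 he (hcov v).choose_spec.2 hv
    constructor
    · intro h
      have h2 := congrArg Subtype.val (s.equivFin.injective h)
      simp only at h2
      rw [hgv] at h2
      exact h2 ▸ (hcov w).choose_spec.2
    · intro hw
      have hgw : (hcov w).choose = e := huniq (hcov w).choose_spec.1 he (hcov w).choose_spec.2 hw
      exact congrArg s.equivFin (Subtype.ext (hgw.trans hgv.symm))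
  · rw [if_neg hcov] at hm
    subst hm
    refine ⟨fun v => if h : ∃ e ∈ s, v ∈ e then
        (s.equivFin ⟨h.choose, h.choose_spec.1⟩).castSucc else Fin.last s.card, ?_⟩
    intro e he v hv w
    beta_reduce
    have hvcov : ∃ e' ∈ s, v ∈ e' := ⟨e, he, hv⟩
    rw [dif_pos hvcov]
    have hgv : hvcov.choose = e := huniq hvcov.choose_spec.1 he hvcov.choose_spec.2 hv
    by_cases hwcov : ∃ e' ∈ s, w ∈ e'
    · rw [dif_pos hwcov]
      constructor
      · intro h
        have h2 := congrArg Subtype.val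
          (s.equivFin.injective (Fin.castSucc_injective _ h))
        simp only at h2
        rw [hgv] at h2
        exact h2 ▸ hwcov.choose_spec.2
      · intro hw
        have hgw : hwcov.choose = e := huniq hwcov.choose_spec.1 he hwcov.choose_spec.2 hw
        exact congrArg Fin.castSucc (congrArg s.equivFin (Subtype.ext (hgw.trans hgv.symm)))
    · rw [dif_neg hwcov]
      constructor
      · intro h
        exact absurd h.symm (Fin.castSucc_lt_last _).ne
      · intro hw
        exact absurd ⟨e, he, hw⟩ hwcov


/-- Construction of structure-aware CFFs from an edge-colouring (overlapping edges, r = 1):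
given an `ℓ`-edge-colouring of the hypergraph `S` with colour classes `C i`, where
`k i = max{|A| : A ∈ C i}` and `f i = |C i|` if the class spans the vertex set and
`|C i| + 1` otherwise, from `1`-CFF(t i, f i) ingredients one obtains an
`(S,1)`-structure-aware CFF with `Σ (t i + k i)` rows, and an `(S,1)`-ECFF with
`Σ t i` rows. -/
theorem stmt16 (n ℓ : ℕ)
    (S : Finset (Finset (Fin n)))
    (col : Finset (Fin n) → Fin ℓ)
    (hcol : ∀ e ∈ S, ∀ e' ∈ S, e ≠ e' → col e = col e' → Disjoint e e')
    (C : Fin ℓ → Finset (Finset (Fin n)))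
    (hC : ∀ i, C i = S.filter (fun e => col e = i))
    (k : Fin ℓ → ℕ) (hk : ∀ i, k i = (C i).sup Finset.card)
    (f : Fin ℓ → ℕ)
    (hf : ∀ i, f i = if (∀ v : Fin n, ∃ e ∈ C i, v ∈ e) then (C i).card
                     else (C i).card + 1)
    (t : Fin ℓ → ℕ)
    (A : ∀ i : Fin ℓ, Fin (t i) → Fin (f i) → Bool)
    (hA : ∀ i, IsCFF 1 (A i)) :
    (∃ M : Fin (∑ i, (t i + k i)) → Fin n → Bool, IsSCFF 1 S M) ∧
    (∃ M' : Fin (∑ i, t i) → Fin n → Bool, IsECFF 1 S M') := by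
  
  classical
  have hdisj : ∀ i : Fin ℓ, ∀ e ∈ C i, ∀ e' ∈ C i, e ≠ e' → Disjoint e e' := by
    intro i e he e' he' hne
    rw [hC i, Finset.mem_filter] at he he'
    exact hcol e he.1 e' he'.1 hne (he.2.trans he'.2.symm)
  choose φ hφ using fun i => exists_phi (C i) (hdisj i) (hf i)
  -- existence of a distinguishing row of A i for a single edge (or no edge)
  have core : ∀ (i₀ : Fin n) (E : Finset (Finset (Fin n))), E ⊆ S → E.card ≤ 1 →
      (∀ e ∈ E, i₀ ∉ e) →
      ∃ i w, A i w (φ i i₀) = true ∧ ∀ j : Fin n, (∃ e ∈ E, j ∈ e) →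
        A i w (φ i j) = false := by
    intro i₀ E hES hE1 hi₀
    rcases Finset.eq_empty_or_nonempty E with rfl | hEne
    · obtain ⟨w, hw, -⟩ := hA (col ∅) (φ (col ∅) i₀) ∅ (by simp) (by simp)
      exact ⟨col ∅, w, hw, by simp⟩
    · obtain ⟨e, rfl⟩ := Finset.card_eq_one.1 (le_antisymm hE1 hEne.card_pos)
      have heS : e ∈ S := hES (Finset.mem_singleton_self e)
      rcases Finset.eq_empty_or_nonempty e with rfl | ⟨v, hv⟩
      · obtain ⟨w, hw, -⟩ := hA (col ∅) (φ (col ∅) i₀) ∅ (by simp) (by simp)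
        refine ⟨col ∅, w, hw, ?_⟩
        rintro j ⟨e', he', hj⟩
        simp only [Finset.mem_singleton] at he'
        subst he'
        exact absurd hj (Finset.notMem_empty j)
      · set i := col e with hi
        have heC : e ∈ C i := by
          rw [hC i, Finset.mem_filter]; exact ⟨heS, rfl⟩
        have hne : φ i i₀ ∉ ({φ i v} : Finset (Fin (f i))) := by
          simp only [Finset.mem_singleton]
          intro h
          exact hi₀ e (Finset.mem_singleton_self e) ((hφ i e heC v hv i₀).1 h)
        obtain ⟨w, hw1, hw2⟩ := hA i (φ i i₀) {φ i v} (by simp) hne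
        refine ⟨i, w, hw1, ?_⟩
        rintro j ⟨e', he', hj⟩
        simp only [Finset.mem_singleton] at he'
        rw [he'] at hj
        have : φ i j = φ i v := (hφ i e heC v hv j).2 hj
        rw [this]
        exact hw2 _ (Finset.mem_singleton_self _)
  constructor
  · -- SCFF part
    let τ : (Σ i : Fin ℓ, Fin (t i + k i)) ≃ Fin (∑ i, (t i + k i)) :=
      Fintype.equivFinOfCardEq (by simp)
    set Mf : (Σ i : Fin ℓ, Fin (t i + k i)) → Fin n → Bool :=
      fun y v => if h : (y.2 : ℕ) < t y.1 then A y.1 ⟨y.2, h⟩ (φ y.1 v)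
        else if ∃ e ∈ C y.1, v ∈ e ∧ rk e v = (y.2 : ℕ) - t y.1 then true else false
      with hMf
    refine ⟨fun x v => Mf (τ.symm x) v, ?_⟩
    intro E hES hE1 I hI i₀ hi₀I
    by_cases hi₀ : ∀ e ∈ E, i₀ ∉ e
    · -- use a CFF row of some colour
      obtain ⟨i, w, hw1, hw2⟩ := core i₀ E hES hE1 hi₀
      refine ⟨τ ⟨i, ⟨(w : ℕ), by omega⟩⟩, ?_, ?_⟩
      · simp only [Equiv.symm_apply_apply, hMf]
        rw [dif_pos w.2]
        simpa using hw1
      · intro j hj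
        simp only [Equiv.symm_apply_apply, hMf]
        rw [dif_pos w.2]
        have := hw2 j (hI j hj)
        simpa using this
    · -- i₀ lies in the edge; use a rank row
      push_neg at hi₀
      obtain ⟨e, heE, hi₀e⟩ := hi₀
      have heS : e ∈ S := hES heE
      set i := col e with hi
      have heC : e ∈ C i := by rw [hC i, Finset.mem_filter]; exact ⟨heS, rfl⟩
      have hp : rk e i₀ < k i := by
        have h1 := rk_lt hi₀e
        have h2 : e.card ≤ k i := by rw [hk i]; exact Finset.le_sup heC
        omega
      refine ⟨τ ⟨i, ⟨t i + rk e i₀, by omega⟩⟩, ?_, ?_⟩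
      · simp only [Equiv.symm_apply_apply, hMf]
        rw [dif_neg (by omega)]
        rw [if_pos ⟨e, heC, hi₀e, by omega⟩]
      · intro j hj
        have hjE := hI j hj
        have hje : j ∈ e := by
          obtain ⟨e', he', hje'⟩ := hjE
          have : E.card = 1 := le_antisymm hE1 (Finset.card_pos.2 ⟨e, heE⟩)
          obtain ⟨e'', he''⟩ := Finset.card_eq_one.1 this
          rw [he''] at heE he'
          simp only [Finset.mem_singleton] at heE he'
          rwa [he'.trans heE.symm] at hje'
        simp only [Equiv.symm_apply_apply, hMf]
        rw [dif_neg (by omega)]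
        rw [if_neg]
        rintro ⟨e', he', hje'', hrk⟩
        have hee' : e' = e := by
          by_contra hne
          exact Finset.disjoint_left.1 (hdisj i e' he' e heC hne) hje'' hje
        subst hee'
        have : t i + rk e' i₀ - t i = rk e' i₀ := by omega
        rw [this] at hrk
        exact hi₀I (rk_inj hje'' hi₀e hrk ▸ hj)
  · -- ECFF part
    let σ : (Σ i : Fin ℓ, Fin (t i)) ≃ Fin (∑ i, t i) :=
      Fintype.equivFinOfCardEq (by simp)
    set Mf' : (Σ i : Fin ℓ, Fin (t i)) → Fin n → Bool :=
      fun y v => A y.1 y.2 (φ y.1 v) with hMf'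
    refine ⟨fun x v => Mf' (σ.symm x) v, ?_⟩
    intro E hES hE1 i₀ hi₀
    obtain ⟨i, w, hw1, hw2⟩ := core i₀ E hES hE1 hi₀
    refine ⟨σ ⟨i, w⟩, ?_, ?_⟩
    · simp only [Equiv.symm_apply_apply, hMf']
      exact hw1
    · intro j hj
      simp only [Equiv.symm_apply_apply, hMf']
      exact hw2 j hj
end

section
/- Let H=([1,n],S) be a hypergraph in which every vertex belongs to some edge, let r ≥ 2, and let C₁,…,C_{s′} be the colour classes of a strong edge-colouring of H (for any two distinct edges of the same colour, no vertex of one is adjacent to any vertex of the other, where two vertices are adjacent if some edge of H contains both). For each i, let k_i = max{|A| : A ∈ C_i}, and let t(d,x) denote the minimum number of rows of a d-CFF with x columns. Then there exists an (S,r)-CFF(t,n) with t ≤ Σ_{i=1}^{s′} ( t(r,|C_i|) + k_i · t(r−1,|C_i|) ). -/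
/-- Construction of structure-aware CFFs from a strong edge-colouring (overlapping edges,
`r ≥ 2`): given a strong `s'`-edge-colouring of `S` (vertices of distinct same-coloured
edges are never adjacent) with colour classes `C i` and `k i = max{|A| : A ∈ C i}`, and
with `tmin d x` the minimum number of rows of a `d`-CFF on `x` columns, there is an
`(S,r)`-structure-aware CFF with at most `Σ_i (tmin r |C i| + k i · tmin (r-1) |C i|)`
rows. -/
theorem stmt18 (n r s' : ℕ) (hr : 2 ≤ r)
    (S : Finset (Finset (Fin n)))
    (hspan : ∀ v : Fin n, ∃ e ∈ S, v ∈ e)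
    (col : Finset (Fin n) → Fin s')
    (hstrong : ∀ e ∈ S, ∀ e' ∈ S, e ≠ e' → col e = col e' →
        ∀ u ∈ e, ∀ v ∈ e', ¬ ∃ f ∈ S, u ∈ f ∧ v ∈ f)
    (C : Fin s' → Finset (Finset (Fin n)))
    (hC : ∀ i, C i = S.filter (fun e => col e = i))
    (k : Fin s' → ℕ) (hk : ∀ i, k i = (C i).sup Finset.card)
    (tmin : ℕ → ℕ → ℕ)
    (htmin : ∀ d x, tmin d x = sInf {t : ℕ | ∃ M : Fin t → Fin x → Bool, IsCFF d M}) :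
    ∃ t : ℕ, t ≤ ∑ i, (tmin r (C i).card + k i * tmin (r - 1) (C i).card) ∧
      ∃ M : Fin t → Fin n → Bool, IsSCFF r S M := by
  classical
  -- a `d`-CFF with `tmin d x` rows always exists
  have hex : ∀ d x : ℕ, ∃ N : Fin (tmin d x) → Fin x → Bool, IsCFF d N := by
    intro d x
    have hid : ∃ M : Fin x → Fin x → Bool, IsCFF d M := by
      refine ⟨fun w j => decide (w = j), ?_⟩
      intro i₀ I hI hi₀
      refine ⟨i₀, by simp, fun j hj => ?_⟩
      simp only [decide_eq_false_iff_not]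
      rintro rfl
      exact hi₀ hj
    have hmem : tmin d x ∈ {t : ℕ | ∃ M : Fin t → Fin x → Bool, IsCFF d M} := by
      rw [htmin]
      exact Nat.sInf_mem ⟨x, hid⟩
    exact hmem
  choose NA hNA using fun i : Fin s' => hex r (C i).card
  choose NB hNB using fun i : Fin s' => hex (r - 1) (C i).card
  -- choice of a colour-`i` edge containing each vertex (when one exists)
  have hEex : ∀ (i : Fin s') (v : Fin n), ∃ e : Finset (Fin n),
      (∃ e' ∈ C i, v ∈ e') → e ∈ C i ∧ v ∈ e := by
    intro i v
    by_cases h : ∃ e' ∈ C i, v ∈ e'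
    · obtain ⟨e, he, hv⟩ := h
      exact ⟨e, fun _ => ⟨he, hv⟩⟩
    · exact ⟨∅, fun h' => absurd h' h⟩
  choose Ed hEd using hEex
  -- edges in a colour class belong to `S` and have that colour
  have hCS : ∀ (i : Fin s') (e : Finset (Fin n)), e ∈ C i → e ∈ S := by
    intro i e he
    rw [hC] at he
    exact (Finset.mem_filter.1 he).1
  have hCcol : ∀ (i : Fin s') (e : Finset (Fin n)), e ∈ C i → col e = i := by
    intro i e he
    rw [hC] at he
    exact (Finset.mem_filter.1 he).2
  -- each edge of `S` meets at most one edge of a given colour class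
  have honef : ∀ (i : Fin s') (f : Finset (Fin n)), f ∈ S →
      ∀ e e' : Finset (Fin n), e ∈ C i → e' ∈ C i →
      (∃ u ∈ f, u ∈ e) → (∃ u ∈ f, u ∈ e') → e = e' := by
    intro i f hfS e e' he he' ⟨u, huf, hue⟩ ⟨u', hu'f, hu'e'⟩
    by_contra hne
    exact hstrong e (hCS i e he) e' (hCS i e' he') hne
      ((hCcol i e he).trans (hCcol i e' he').symm) u hue u' hu'e' ⟨f, hfS, huf, hu'f⟩
  -- position function within an edge
  have hposex : ∀ e : Finset (Fin n), ∃ f : Fin n → ℕ,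
      (∀ v ∈ e, f v < e.card) ∧ (∀ u ∈ e, ∀ v ∈ e, f u = f v → u = v) := by
    intro e
    refine ⟨fun v => if hv : v ∈ e then ((e.equivFin ⟨v, hv⟩ : Fin e.card) : ℕ) else 0, ?_, ?_⟩
    · intro v hv
      simp only [dif_pos hv]
      exact (e.equivFin ⟨v, hv⟩).isLt
    · intro u hu v hv huv
      simp only [dif_pos hu, dif_pos hv] at huv
      have := e.equivFin.injective (Fin.ext huv)
      exact congrArg Subtype.val this
  choose pos hpos1 hpos2 using hposex
  -- the row index type
  let RT := Σ i : Fin s', (Fin (tmin r (C i).card) ⊕ (Fin (k i) × Fin (tmin (r - 1) (C i).card)))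
  let M' : RT → Fin n → Bool := fun w v =>
    match w with
    | ⟨i, Sum.inl a⟩ =>
        if h : Ed i v ∈ C i ∧ v ∈ Ed i v then NA i a ((C i).equivFin ⟨Ed i v, h.1⟩) else false
    | ⟨i, Sum.inr (p, b)⟩ =>
        if h : Ed i v ∈ C i ∧ v ∈ Ed i v then
          (if pos (Ed i v) v = (p : ℕ) then NB i b ((C i).equivFin ⟨Ed i v, h.1⟩) else false)
        else false
  have cardEq : Fintype.card RT = ∑ i, (tmin r (C i).card + k i * tmin (r - 1) (C i).card) := by
    simp [RT, Fintype.card_sigma, Fintype.card_sum, Fintype.card_prod]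
  refine ⟨Fintype.card RT, le_of_eq cardEq, ?_⟩
  obtain ⟨eqv⟩ : Nonempty (Fin (Fintype.card RT) ≃ RT) := ⟨(Fintype.equivFin RT).symm⟩
  refine ⟨fun w => M' (eqv w), ?_⟩
  intro E' hE'S hE'card I hI i₀ hi₀I
  suffices h : ∃ wr : RT, M' wr i₀ = true ∧ ∀ j ∈ I, M' wr j = false by
    obtain ⟨wr, h1, h2⟩ := h
    refine ⟨eqv.symm wr, ?_, fun j hj => ?_⟩
    · simpa using h1
    · simpa using h2 j hj
  -- the colour of an edge containing i₀
  obtain ⟨e₀, he₀S, hi₀e₀⟩ := hspan i₀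
  set i := col e₀ with hidef
  have he₀C : e₀ ∈ C i := by
    rw [hC]
    exact Finset.mem_filter.2 ⟨he₀S, rfl⟩
  have hEd0 := hEd i i₀ ⟨e₀, he₀C, hi₀e₀⟩
  set A := Ed i i₀ with hAdef
  have hACi : A ∈ C i := hEd0.1
  have hi₀A : i₀ ∈ A := hEd0.2
  -- colour-i edges meeting I
  set T := (C i).filter (fun e' => ∃ j ∈ I, j ∈ e') with hTdef
  have hTsub : ∀ e' ∈ T, e' ∈ C i := fun e' he' => (Finset.mem_filter.1 he').1
  have hTcard : T.card ≤ r := by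
    have hFex : ∀ e' : Finset (Fin n), ∃ f : Finset (Fin n),
        e' ∈ T → f ∈ E' ∧ ∃ u, u ∈ f ∧ u ∈ e' := by
      intro e'
      by_cases h : e' ∈ T
      · obtain ⟨j, hjI, hje'⟩ := (Finset.mem_filter.1 h).2
        obtain ⟨f, hfE, hjf⟩ := hI j hjI
        exact ⟨f, fun _ => ⟨hfE, j, hjf, hje'⟩⟩
      · exact ⟨∅, fun h' => absurd h' h⟩
    choose F hF using hFex
    have hmaps : ∀ e' ∈ T, F e' ∈ E' := fun e' he' => (hF e' he').1
    have hinj : Set.InjOn F ↑T := by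
      intro e' he' e'' he'' heq
      have h1 := hF e' he'
      have h2 := hF e'' he''
      refine honef i (F e') (hE'S h1.1) e' e'' (hTsub e' he') (hTsub e'' he'') ?_ ?_
      · obtain ⟨u, hu1, hu2⟩ := h1.2
        exact ⟨u, hu1, hu2⟩
      · obtain ⟨u, hu1, hu2⟩ := h2.2
        exact ⟨u, heq ▸ hu1, hu2⟩
    exact le_trans (Finset.card_le_card_of_injOn F hmaps hinj) hE'card
  -- index of A among colour-i edges
  set idxA : Fin (C i).card := (C i).equivFin ⟨A, hACi⟩ with hidxA
  have hidxinj : ∀ (e e' : Finset (Fin n)) (he : e ∈ C i) (he' : e' ∈ C i),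
      (C i).equivFin ⟨e, he⟩ = (C i).equivFin ⟨e', he'⟩ → e = e' := by
    intro e e' he he' h
    exact congrArg Subtype.val ((C i).equivFin.injective h)
  by_cases hcase : ∃ j ∈ I, j ∈ A
  · -- some element of I lies in A: use the (r-1)-CFF block
    set T' := T.erase A with hT'def
    have hAT : A ∈ T := Finset.mem_filter.2 ⟨hACi, hcase⟩
    have hT'card : T'.card ≤ r - 1 := by
      have h1 : T'.card = T.card - 1 := by
        rw [hT'def]
        exact Finset.card_erase_of_mem hAT
      omega
    set J' := T'.attach.image
      (fun x => (C i).equivFin ⟨x.1, hTsub x.1 (Finset.mem_of_mem_erase x.2)⟩) with hJ'def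
    have hJ'card : J'.card ≤ r - 1 := by
      refine le_trans (le_trans Finset.card_image_le ?_) hT'card
      rw [Finset.card_attach]
    have hidxnot : idxA ∉ J' := by
      intro hmem
      rw [hJ'def] at hmem
      obtain ⟨x, _, heq⟩ := Finset.mem_image.1 hmem
      have hxA : x.1 = A := hidxinj x.1 A (hTsub x.1 (Finset.mem_of_mem_erase x.2)) hACi heq
      exact (Finset.ne_of_mem_erase x.2) hxA
    obtain ⟨w, hw1, hw2⟩ := hNB i idxA J' hJ'card hidxnot
    have hkA : A.card ≤ k i := by
      rw [hk]
      exact Finset.le_sup hACi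
    have hplt : pos A i₀ < k i := lt_of_lt_of_le (hpos1 A i₀ hi₀A) hkA
    refine ⟨⟨i, Sum.inr (⟨pos A i₀, hplt⟩, w)⟩, ?_, ?_⟩
    · show (if h : Ed i i₀ ∈ C i ∧ i₀ ∈ Ed i i₀ then
          (if pos (Ed i i₀) i₀ = pos A i₀ then NB i w ((C i).equivFin ⟨Ed i i₀, h.1⟩) else false)
        else false) = true
      rw [dif_pos ⟨hACi, hi₀A⟩, if_pos rfl]
      exact hw1
    · intro j hj
      show (if h : Ed i j ∈ C i ∧ j ∈ Ed i j then
          (if pos (Ed i j) j = pos A i₀ then NB i w ((C i).equivFin ⟨Ed i j, h.1⟩) else false)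
        else false) = false
      by_cases h : Ed i j ∈ C i ∧ j ∈ Ed i j
      · rw [dif_pos h]
        by_cases hjA : Ed i j = A
        · rw [if_neg]
          intro heq
          rw [hjA] at heq
          have hjmem : j ∈ A := hjA ▸ h.2
          have : j = i₀ := hpos2 A j hjmem i₀ hi₀A heq
          exact hi₀I (this ▸ hj)
        · by_cases hp : pos (Ed i j) j = pos A i₀
          · rw [if_pos hp]
            apply hw2
            rw [hJ'def]
            have hT'mem : Ed i j ∈ T' := by
              refine Finset.mem_erase.2 ⟨hjA, ?_⟩
              exact Finset.mem_filter.2 ⟨h.1, j, hj, h.2⟩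
            exact Finset.mem_image.2 ⟨⟨Ed i j, hT'mem⟩, Finset.mem_attach _ _, rfl⟩
          · rw [if_neg hp]
      · rw [dif_neg h]
  · -- no element of I lies in A: use the r-CFF block
    set J := T.attach.image (fun x => (C i).equivFin ⟨x.1, hTsub x.1 x.2⟩) with hJdef
    have hJcard : J.card ≤ r := by
      refine le_trans (le_trans Finset.card_image_le ?_) hTcard
      rw [Finset.card_attach]
    have hidxnot : idxA ∉ J := by
      intro hmem
      rw [hJdef] at hmem
      obtain ⟨x, _, heq⟩ := Finset.mem_image.1 hmem
      have hxA : x.1 = A := hidxinj x.1 A (hTsub x.1 x.2) hACi heq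
      have := (Finset.mem_filter.1 x.2).2
      rw [hxA] at this
      exact hcase this
    obtain ⟨w, hw1, hw2⟩ := hNA i idxA J hJcard hidxnot
    refine ⟨⟨i, Sum.inl w⟩, ?_, ?_⟩
    · show (if h : Ed i i₀ ∈ C i ∧ i₀ ∈ Ed i i₀ then
          NA i w ((C i).equivFin ⟨Ed i i₀, h.1⟩) else false) = true
      rw [dif_pos ⟨hACi, hi₀A⟩]
      exact hw1
    · intro j hj
      show (if h : Ed i j ∈ C i ∧ j ∈ Ed i j then
          NA i w ((C i).equivFin ⟨Ed i j, h.1⟩) else false) = false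
      by_cases h : Ed i j ∈ C i ∧ j ∈ Ed i j
      · rw [dif_pos h]
        apply hw2
        rw [hJdef]
        have hTmem : Ed i j ∈ T := Finset.mem_filter.2 ⟨h.1, j, hj, h.2⟩
        exact Finset.mem_image.2 ⟨⟨Ed i j, hTmem⟩, Finset.mem_attach _ _, rfl⟩
      · rw [dif_neg h]
end
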